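/- Let L ≥ 1, and for j = 0,...,2L−1 set γ_j = (2j+1)π/4. Then ∑_{l=0}^{L-1} (1/(2l+1)) sin((2l+1)γ_j/L) = (1/(2L)) ∫_0^{γ_j} sin(2t)/sin(t/L) dt. -/
import Mathlib

open MeasureTheory

lemma sin_mul_sum_cos (L : ℕ) (x : ℝ) :
    2 * Real.sin x * ∑ l ∈ Finset.range L, Real.cos ((2 * (l:ℝ) + 1) * x)
      = Real.sin (2 * (L:ℝ) * x) := by
  induction L with
  | zero => simp
  | succ n ih =>
    rw [Finset.sum_range_succ, mul_add, ih]
    push_cast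
    have h1 := Real.sin_add ((2*(n:ℝ)+1)*x) x
    have h2 := Real.sin_sub ((2*(n:ℝ)+1)*x) x
    have e1 : (2*(n:ℝ)+1)*x + x = 2*((n:ℝ)+1)*x := by ring
    have e2 : (2*(n:ℝ)+1)*x - x = 2*(n:ℝ)*x := by ring
    rw [e1] at h1; rw [e2] at h2
    nlinarith [h1, h2]

theorem sum_eq_integral_gamma (L : ℕ) (hL : 1 ≤ L) (j : ℕ) (hj : j < 2 * L) :
    ∑ l ∈ Finset.range L, (1 / (2 * (l : ℝ) + 1)) *
        Real.sin ((2 * (l : ℝ) + 1) * ((2 * (j : ℝ) + 1) * Real.pi / 4) / (L : ℝ))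
      = (1 / (2 * (L : ℝ))) *
        ∫ t in (0:ℝ)..((2 * (j : ℝ) + 1) * Real.pi / 4),
          Real.sin (2 * t) / Real.sin (t / (L : ℝ)) := by
  have hL0 : (L:ℝ) ≠ 0 := by positivity
  set γ : ℝ := (2 * (j : ℝ) + 1) * Real.pi / 4 with hγ
  -- Step 1: each term as an integral
  have step1 : ∀ l : ℕ, (1 / (2 * (l : ℝ) + 1)) *
      Real.sin ((2 * (l : ℝ) + 1) * γ / (L : ℝ))
      = (1 / (L:ℝ)) * ∫ t in (0:ℝ)..γ, Real.cos ((2 * (l:ℝ) + 1) * t / (L:ℝ)) := by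
    intro l
    have hc : (2 * (l:ℝ) + 1) / (L:ℝ) ≠ 0 := by positivity
    have : ∫ t in (0:ℝ)..γ, Real.cos ((2 * (l:ℝ) + 1) * t / (L:ℝ))
        = ∫ t in (0:ℝ)..γ, Real.cos (((2 * (l:ℝ) + 1)/(L:ℝ)) * t) := by
      congr 1; ext t; ring_nf
    rw [this, intervalIntegral.integral_comp_mul_left Real.cos hc, integral_cos]
    simp only [mul_zero, Real.sin_zero, sub_zero, smul_eq_mul]
    field_simp
  rw [Finset.sum_congr rfl fun l _ => step1 l, ← Finset.mul_sum]
  have hswap := intervalIntegral.integral_finset_sum (μ := volume) (a := (0:ℝ)) (b := γ)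
      (f := fun (l : ℕ) (t : ℝ) => Real.cos ((2 * (l:ℝ) + 1) * t / (L:ℝ)))
      (s := Finset.range L)
      (fun l _ => (Continuous.intervalIntegrable (by continuity) _ _))
  rw [← hswap]
  -- Step 2: a.e. equality of integrands
  have hnull : volume {t : ℝ | Real.sin (t / (L:ℝ)) = 0} = 0 := by
    have : {t : ℝ | Real.sin (t / (L:ℝ)) = 0} ⊆ Set.range (fun k : ℤ => (k:ℝ) * Real.pi * L) := by
      intro t ht
      simp only [Set.mem_setOf_eq, Real.sin_eq_zero_iff] at ht
      obtain ⟨k, hk⟩ := ht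
      exact ⟨k, by field_simp at hk ⊢; linarith [hk]⟩
    exact measure_mono_null this ((Set.countable_range _).measure_zero volume)
  have hae : ∀ᵐ t : ℝ, t ∈ Set.uIoc (0:ℝ) γ →
      (∑ l ∈ Finset.range L, Real.cos ((2 * (l:ℝ) + 1) * t / (L:ℝ)))
      = (1/2) * (Real.sin (2 * t) / Real.sin (t / (L:ℝ))) := by
    filter_upwards [measure_eq_zero_iff_ae_notMem.mp hnull] with t ht _
    have hs : Real.sin (t / (L:ℝ)) ≠ 0 := ht
    have key := sin_mul_sum_cos L (t / (L:ℝ))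
    have e : 2 * (L:ℝ) * (t / (L:ℝ)) = 2 * t := by field_simp
    rw [e] at key
    have e2 : ∀ l : ℕ, (2 * (l:ℝ) + 1) * (t / (L:ℝ)) = (2 * (l:ℝ) + 1) * t / (L:ℝ) := by
      intro l; ring
    simp_rw [e2] at key
    field_simp
    linarith [key]
  rw [intervalIntegral.integral_congr_ae hae, intervalIntegral.integral_const_mul]
  ring
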